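/- Let A be a unital C*-algebra, B ⊆ A a unital C*-subalgebra, and E : A → B a contractive linear map with E(b) = b for all b ∈ B. Then for all a, a' ∈ A, ‖aa' − E(aa')‖ ≤ 2(‖a‖·‖a' − E(a')‖ + ‖a'‖·‖a − E(a)‖). In particular the seminorm a ↦ ‖a − E(a)‖ is (2,0)-quasi-Leibniz for the Jordan product a∘a' = (aa' + a'a)/2 and Lie product {a,a'} = (aa' − a'a)/(2i): max(‖a∘a' − E(a∘a')‖, ‖{a,a'} − E({a,a'})‖) ≤ 2(‖a‖·‖a' − E(a')‖ + ‖a'‖·‖a − E(a)‖). -/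

import Mathlib

/-!
Put `d := a a' - E(a) E(a')`. Since `E(a) E(a') ∈ B` is fixed by `E`, we get
`a a' - E(a a') = d - E d`, whose norm is at most `2 ‖d‖` by contractivity, while
`d = (a - E a) a' + E(a) (a' - E a')` gives `‖d‖ ≤ ‖a - E a‖ ‖a'‖ + ‖a‖ ‖a' - E a'‖`.
The Jordan and Lie products are `1/2`-scaled sums and differences of `a a'` and `a' a`,
to which the product estimate applies in both orders.
-/

theorem norm_mul_sub_mul_le {A : Type*} [NonUnitalSeminormedRing A] (a b c d : A) :
    ‖a * b - c * d‖ ≤ ‖a - c‖ * ‖b‖ + ‖c‖ * ‖b - d‖ :=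
  calc ‖a * b - c * d‖ = ‖(a - c) * b + c * (b - d)‖ := by noncomm_ring
    _ ≤ ‖a - c‖ * ‖b‖ + ‖c‖ * ‖b - d‖ := norm_add_le_of_le (norm_mul_le _ _) (norm_mul_le _ _)

theorem norm_sub_map_le_two_mul {A : Type*} [SeminormedAddGroup A] {E : A → A}
    (hE : ∀ x, ‖E x‖ ≤ ‖x‖) (x : A) : ‖x - E x‖ ≤ 2 * ‖x‖ :=
  (norm_sub_le _ _).trans (by linarith [hE x])

theorem norm_mul_sub_map_mul_le {A F : Type*} [NonUnitalSeminormedRing A] [FunLike F A A]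
    [AddMonoidHomClass F A A] {E : F} (hE : ∀ x, ‖E x‖ ≤ ‖x‖) {a a' : A}
    (hfix : E (E a * E a') = E a * E a') :
    ‖a * a' - E (a * a')‖ ≤ 2 * (‖a‖ * ‖a' - E a'‖ + ‖a'‖ * ‖a - E a‖) := by
  set d := a * a' - E a * E a'
  have hd : a * a' - E (a * a') = d - E d := by
    simp only [d, map_sub, hfix]
    abel
  have hd_le : ‖d‖ ≤ ‖a‖ * ‖a' - E a'‖ + ‖a'‖ * ‖a - E a‖ := by
    refine (norm_mul_sub_mul_le a a' (E a) (E a')).trans ?_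
    have := mul_le_mul_of_nonneg_right (hE a) (norm_nonneg (a' - E a'))
    linarith [mul_comm ‖a - E a‖ ‖a'‖]
  rw [hd]
  linarith [norm_sub_map_le_two_mul hE d]

section Linear

variable {𝕜 A : Type*} [NormedField 𝕜] [SeminormedAddCommGroup A] [NormedSpace 𝕜 A]
  (E : A →ₗ[𝕜] A) (c : 𝕜) (x y : A)

theorem norm_smul_add_sub_map_le :
    ‖c • (x + y) - E (c • (x + y))‖ ≤ ‖c‖ * (‖x - E x‖ + ‖y - E y‖) := by
  rw [map_smul, ← smul_sub, norm_smul, map_add, add_sub_add_comm]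
  gcongr
  exact norm_add_le _ _

theorem norm_smul_sub_sub_map_le :
    ‖c • (x - y) - E (c • (x - y))‖ ≤ ‖c‖ * (‖x - E x‖ + ‖y - E y‖) := by
  rw [map_smul, ← smul_sub, norm_smul, map_sub, sub_sub_sub_comm]
  gcongr
  exact norm_sub_le _ _

end Linear

theorem condExp_quasiLeibniz_general
    {A : Type*} [NormedRing A] [StarRing A]
    [NormedAlgebra ℂ A] [StarModule ℂ A]
    (B : StarSubalgebra ℂ A)
    (E : A →ₗ[ℂ] A)
    (hrange : ∀ a : A, E a ∈ B)
    (hfix : ∀ b ∈ B, E b = b)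
    (hcontr : ∀ a : A, ‖E a‖ ≤ ‖a‖)
    (a a' : A) :
    ‖a * a' - E (a * a')‖ ≤ 2 * (‖a‖ * ‖a' - E a'‖ + ‖a'‖ * ‖a - E a‖) ∧
    max ‖(2 : ℂ)⁻¹ • (a * a' + a' * a) - E ((2 : ℂ)⁻¹ • (a * a' + a' * a))‖
        ‖(2 * Complex.I)⁻¹ • (a * a' - a' * a) - E ((2 * Complex.I)⁻¹ • (a * a' - a' * a))‖
      ≤ 2 * (‖a‖ * ‖a' - E a'‖ + ‖a'‖ * ‖a - E a‖) := by
  have hprod : ∀ x y : A, ‖x * y - E (x * y)‖ ≤ 2 * (‖x‖ * ‖y - E y‖ + ‖y‖ * ‖x - E x‖) :=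
    fun x y => norm_mul_sub_map_mul_le hcontr (hfix _ (mul_mem (hrange x) (hrange y)))
  have h := hprod a a'
  have h' := hprod a' a
  have hJ := norm_smul_add_sub_map_le E (2 : ℂ)⁻¹ (a * a') (a' * a)
  have hL := norm_smul_sub_sub_map_le E (2 * Complex.I)⁻¹ (a * a') (a' * a)
  have h2 : ‖(2 : ℂ)⁻¹‖ = 2⁻¹ := by simp
  have h2I : ‖(2 * Complex.I)⁻¹‖ = 2⁻¹ := by simp
  rw [h2] at hJ
  rw [h2I] at hL
  exact ⟨h, max_le (by linarith) (by linarith)⟩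

/-- for a contractive linear map `E : A → B ⊆ A` fixing `B` pointwise,
the seminorm `a ↦ ‖a − E a‖` satisfies a (2,0)-quasi-Leibniz estimate for products,
and hence for the Jordan product `a∘a' = (aa' + a'a)/2` and the Lie product
`{a,a'} = (aa' − a'a)/(2i)`. -/
theorem condExp_quasiLeibniz
    {A : Type*} [NormedRing A] [StarRing A] [CStarRing A] [Nontrivial A]
    [NormedAlgebra ℂ A] [StarModule ℂ A]
    (B : StarSubalgebra ℂ A)
    (E : A →ₗ[ℂ] A)
    (hrange : ∀ a : A, E a ∈ B)
    (hfix : ∀ b ∈ B, E b = b)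
    (hcontr : ∀ a : A, ‖E a‖ ≤ ‖a‖)
    (a a' : A) :
    ‖a * a' - E (a * a')‖ ≤ 2 * (‖a‖ * ‖a' - E a'‖ + ‖a'‖ * ‖a - E a‖) ∧
    max ‖(2 : ℂ)⁻¹ • (a * a' + a' * a) - E ((2 : ℂ)⁻¹ • (a * a' + a' * a))‖
        ‖(2 * Complex.I)⁻¹ • (a * a' - a' * a) - E ((2 * Complex.I)⁻¹ • (a * a' - a' * a))‖
      ≤ 2 * (‖a‖ * ‖a' - E a'‖ + ‖a'‖ * ‖a - E a‖) :=
  condExp_quasiLeibniz_general B E hrange hfix hcontr a a'
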